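/- (Commutator-type estimate for the quadratic term.) For every integer α ≥ 2 there exists a constant C = C(α) > 0 such that for every real-valued Schwartz function v on ℝ: | ∫_ℝ ∂_x^α(v²)(x) · ∂_x^{α+1}v(x) dx | ≤ C · ‖∂_x^α v‖₁² · ‖v‖_{α−1}. -/

import Mathlib

/- STATEMENT 9.  (Commutator-type estimate for the quadratic term.)
For a real-valued Schwartz function w and k ∈ ℕ, ‖w‖_k := (Σ_{j=0}^k ‖∂_x^j w‖_{L²}²)^{1/2}
is the integer-order Sobolev norm (`HkN` below); in particular
‖∂_x^α v‖₁ = (‖∂_x^α v‖₀² + ‖∂_x^{α+1} v‖₀²)^{1/2}.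
Claim: for every integer α ≥ 2 there is C = C(α) > 0 such that for every real-valued
Schwartz function v on ℝ,
  |∫ ∂_x^α(v²)·∂_x^{α+1}v dx| ≤ C·‖∂_x^α v‖₁²·‖v‖_{α−1}. -/

open Real MeasureTheory

/-- Integer-order Sobolev norm `‖f‖_k = (Σ_{j=0}^k ‖∂^j f‖_{L²}²)^{1/2}`. -/
noncomputable def HkN (k : ℕ) (f : ℝ → ℝ) : ℝ :=
  Real.sqrt (∑ j ∈ Finset.range (k + 1), ∫ x : ℝ, (iteratedDeriv j f x)^2)

/-! Expanding `∂^α (v²)` by the Leibniz rule and integrating by parts once turns every term into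
`∫ v^(p) v^(q) v^(α)` with `p + q = α + 1`. Putting one factor in sup norm, via the one-dimensional
bound `‖f‖_∞ ≤ ‖f‖ + ‖f'‖`, leaves the products `‖v^(p)‖ ‖v^(q)‖` and `‖v^(p+1)‖ ‖v^(q)‖`. Since
`‖f'‖² = -∫ f'' f ≤ ‖f‖ ‖f''‖`, the sequence `k ↦ ‖v^(k)‖` is log-convex, so these products are
at most `‖v‖ ‖v^(α+1)‖` and `‖v'‖ ‖v^(α+1)‖`; for `α ≥ 2` both `‖v‖` and `‖v'‖` are bounded by
`‖v‖_{α-1}`. -/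

open SchwartzMap

noncomputable def l2Norm (f : ℝ → ℝ) : ℝ := √(∫ x, f x ^ 2)

lemma l2Norm_nonneg (f : ℝ → ℝ) : 0 ≤ l2Norm f := sqrt_nonneg _

lemma l2Norm_iteratedDeriv_le_HkN {k n : ℕ} (hkn : k ≤ n) (f : ℝ → ℝ) :
    l2Norm (iteratedDeriv k f) ≤ HkN n f :=
  sqrt_le_sqrt <| Finset.single_le_sum (f := fun j => ∫ x, iteratedDeriv j f x ^ 2)
    (fun _ _ => integral_nonneg fun _ => sq_nonneg _) (Finset.mem_range.mpr (by omega))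

namespace SchwartzMap

lemma coe_iterate_derivCLM {F : Type*} [NormedAddCommGroup F] [NormedSpace ℝ F]
    (n : ℕ) (f : 𝓢(ℝ, F)) : ⇑((derivCLM ℝ F)^[n] f) = iteratedDeriv n f := by
  induction n with
  | zero => rfl
  | succ n ih =>
    rw [Function.iterate_succ_apply', iteratedDeriv_succ, ← ih]
    rfl

variable (f g h : 𝓢(ℝ, ℝ))

lemma integrable_mul : Integrable (fun x => f x * g x) :=
  (pairing (ContinuousLinearMap.mul ℝ ℝ) f g).integrable

lemma integrable_mul_mul : Integrable (fun x => f x * g x * h x) :=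
  integrable_mul (pairing (ContinuousLinearMap.mul ℝ ℝ) f g) h

lemma integral_abs_mul_le : ∫ x, |f x * g x| ≤ l2Norm f * l2Norm g := by
  have hf : MemLp f (ENNReal.ofReal 2) := by simpa using f.memLp 2
  have hg : MemLp g (ENNReal.ofReal 2) := by simpa using g.memLp 2
  have := integral_mul_norm_le_Lp_mul_Lq Real.HolderConjugate.two_two hf hg
  simp only [Real.rpow_two, Real.norm_eq_abs, sq_abs, ← abs_mul] at this
  rwa [l2Norm, l2Norm, Real.sqrt_eq_rpow, Real.sqrt_eq_rpow]

lemma abs_integral_mul_le : |∫ x, f x * g x| ≤ l2Norm f * l2Norm g :=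
  (abs_integral_le_integral_abs).trans (integral_abs_mul_le f g)

lemma integral_mul_mul_deriv :
    ∫ x, f x * g x * deriv h x
      = -((∫ x, deriv f x * g x * h x) + ∫ x, f x * deriv g x * h x) := by
  have hfg : deriv (pairing (ContinuousLinearMap.mul ℝ ℝ) f g)
      = fun x => deriv f x * g x + f x * deriv g x := by
    ext x
    exact deriv_mul f.differentiableAt g.differentiableAt
  have := integral_mul_deriv_eq_neg_deriv_mul (pairing (ContinuousLinearMap.mul ℝ ℝ) f g) h
  simp only [hfg, add_mul] at this
  have h₁ : Integrable fun x => deriv f x * g x * h x := integrable_mul_mul (derivCLM ℝ ℝ f) g h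
  have h₂ : Integrable fun x => f x * deriv g x * h x := integrable_mul_mul f (derivCLM ℝ ℝ g) h
  rwa [← integral_add h₁ h₂]

lemma sq_le_two_mul_l2Norm_mul (x : ℝ) : f x ^ 2 ≤ 2 * (l2Norm f * l2Norm (deriv f)) := by
  have hderiv : ∀ y, HasDerivAt (fun y => f y ^ 2) (2 * (f y * deriv f y)) y := fun y => by
    simpa [mul_comm, mul_left_comm] using (f.hasDerivAt y).fun_pow 2
  have hint : Integrable fun y => 2 * (f y * deriv f y) :=
    (integrable_mul f (derivCLM ℝ ℝ f)).const_mul 2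
  have hlim : Filter.Tendsto (fun y => f y ^ 2) Filter.atBot (nhds 0) := by
    simpa using ((zero_at_infty f).mono_left atBot_le_cocompact).pow 2
  have hFTC := integral_Iic_of_hasDerivAt_of_tendsto' (a := x) (fun y _ => hderiv y)
    hint.integrableOn hlim
  rw [sub_zero] at hFTC
  calc f x ^ 2 = ∫ y in Set.Iic x, 2 * (f y * deriv f y) := hFTC.symm
    _ ≤ ∫ y, |2 * (f y * deriv f y)| :=
      (integral_mono hint.integrableOn hint.abs.integrableOn fun _ => le_abs_self _).trans
        (setIntegral_le_integral hint.abs (.of_forall fun _ => abs_nonneg _))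
    _ = 2 * ∫ y, |f y * deriv f y| := by simp only [abs_mul, abs_two, integral_const_mul]
    _ ≤ 2 * (l2Norm f * l2Norm (deriv f)) := by
      gcongr; exact integral_abs_mul_le f (derivCLM ℝ ℝ f)

lemma abs_le_l2Norm_add (x : ℝ) : |f x| ≤ l2Norm f + l2Norm (deriv f) := by
  have hsq := sq_le_two_mul_l2Norm_mul f x
  have hf := l2Norm_nonneg f
  have hf' := l2Norm_nonneg (deriv f)
  exact abs_le_of_sq_le_sq (by nlinarith [sq_nonneg (l2Norm f - l2Norm (deriv f))])
    (add_nonneg hf hf')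

lemma abs_integral_mul_mul_le :
    |∫ x, f x * g x * h x| ≤ (l2Norm f + l2Norm (deriv f)) * (l2Norm g * l2Norm h) := by
  calc |∫ x, f x * g x * h x| ≤ ∫ x, (l2Norm f + l2Norm (deriv f)) * |g x * h x| := by
        refine abs_integral_le_integral_abs.trans <|
          integral_mono (integrable_mul_mul f g h).abs ((integrable_mul g h).abs.const_mul _)
            fun x => ?_
        rw [mul_assoc, abs_mul]
        exact mul_le_mul_of_nonneg_right (abs_le_l2Norm_add f x) (abs_nonneg _)
    _ ≤ (l2Norm f + l2Norm (deriv f)) * (l2Norm g * l2Norm h) := by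
        rw [integral_const_mul]
        exact mul_le_mul_of_nonneg_left (integral_abs_mul_le g h)
          (add_nonneg (l2Norm_nonneg _) (l2Norm_nonneg _))

lemma l2Norm_deriv_sq_le : l2Norm (deriv f) ^ 2 ≤ l2Norm f * l2Norm (deriv (deriv f)) := by
  have hibp := integral_mul_deriv_eq_neg_deriv_mul (derivCLM ℝ ℝ f) f
  calc l2Norm (deriv f) ^ 2 = ∫ x, deriv f x * deriv f x := by
        rw [l2Norm, sq_sqrt (integral_nonneg fun _ => sq_nonneg _)]
        simp only [sq]
    _ = -∫ x, deriv (deriv f) x * f x := hibp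
    _ ≤ |∫ x, deriv (deriv f) x * f x| := neg_le_abs _
    _ ≤ l2Norm f * l2Norm (deriv (deriv f)) := by
        rw [mul_comm]; exact abs_integral_mul_le (derivCLM ℝ ℝ (derivCLM ℝ ℝ f)) f

end SchwartzMap

lemma mul_le_mul_succ_of_logConvex (a : ℕ → ℝ) (h0 : ∀ k, 0 ≤ a k)
    (hsq : ∀ k, a (k + 1) ^ 2 ≤ a k * a (k + 2)) {k j : ℕ} (hkj : k ≤ j) :
    a (k + 1) * a j ≤ a k * a (j + 1) := by
  induction j, hkj using Nat.le_induction with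
  | base => rw [mul_comm]
  | succ j _ ih =>
    rcases (h0 (j + 1)).eq_or_lt with hzero | hpos
    · rw [← hzero, mul_zero]
      exact mul_nonneg (h0 k) (h0 (j + 2))
    · refine le_of_mul_le_mul_left ?_ hpos
      calc a (j + 1) * (a (k + 1) * a (j + 1)) = a (k + 1) * a (j + 1) ^ 2 := by ring
        _ ≤ a (k + 1) * (a j * a (j + 2)) := mul_le_mul_of_nonneg_left (hsq j) (h0 _)
        _ = a (k + 1) * a j * a (j + 2) := by ring
        _ ≤ a k * a (j + 1) * a (j + 2) := mul_le_mul_of_nonneg_right ih (h0 _)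
        _ = a (j + 1) * (a k * a (j + 1 + 1)) := by ring

lemma mul_le_mul_outer_of_logConvex (a : ℕ → ℝ) (h0 : ∀ k, 0 ≤ a k)
    (hsq : ∀ k, a (k + 1) ^ 2 ≤ a k * a (k + 2)) (i m n : ℕ) :
    a (i + m) * a (i + n) ≤ a i * a (i + m + n) := by
  induction m generalizing i n with
  | zero => simp
  | succ m ih =>
    cases n with
    | zero => simp [mul_comm]
    | succ n =>
      calc a (i + (m + 1)) * a (i + (n + 1)) = a (i + 1 + m) * a (i + 1 + n) := by
            ring_nf
        _ ≤ a (i + 1) * a (i + 1 + m + n) := ih (i + 1) n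
        _ ≤ a i * a (i + 1 + m + n + 1) := mul_le_mul_succ_of_logConvex a h0 hsq (by omega)
        _ = a i * a (i + (m + 1) + (n + 1)) := by ring_nf

section IteratedDerivatives

variable (v : 𝓢(ℝ, ℝ))

lemma l2Norm_iteratedDeriv_succ_sq_le (k : ℕ) :
    l2Norm (iteratedDeriv (k + 1) v) ^ 2
      ≤ l2Norm (iteratedDeriv k v) * l2Norm (iteratedDeriv (k + 2) v) := by
  simpa only [coe_iterate_derivCLM, iteratedDeriv_succ] using
    l2Norm_deriv_sq_le ((derivCLM ℝ ℝ)^[k] v)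

lemma abs_integral_iteratedDeriv_mul_le (h : 𝓢(ℝ, ℝ)) (p q : ℕ) :
    |∫ x, iteratedDeriv p v x * iteratedDeriv q v x * h x|
      ≤ (l2Norm (iteratedDeriv 0 v) + l2Norm (iteratedDeriv 1 v))
        * l2Norm (iteratedDeriv (p + q) v) * l2Norm h := by
  set a := fun k => l2Norm (iteratedDeriv k v)
  have h0 : ∀ k, 0 ≤ a k := fun k => l2Norm_nonneg _
  have hbound := fun p q =>
    abs_integral_mul_mul_le ((derivCLM ℝ ℝ)^[p] v) ((derivCLM ℝ ℝ)^[q] v) h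
  simp only [coe_iterate_derivCLM, ← iteratedDeriv_succ] at hbound
  -- the sup norm goes on `v` itself when `q = 0`, on `v^(p)` otherwise
  cases q with
  | zero =>
    simp_rw [mul_comm (iteratedDeriv p v _) (iteratedDeriv 0 v _)]
    calc _ ≤ _ := hbound 0 p
      _ = _ := by rw [zero_add, add_zero, mul_assoc]
  | succ q =>
    have hlog := mul_le_mul_outer_of_logConvex a h0 (l2Norm_iteratedDeriv_succ_sq_le v)
    have h₀ : a p * a (q + 1) ≤ a 0 * a (p + (q + 1)) := by
      simpa using hlog 0 p (q + 1)
    have h₁ : a (p + 1) * a (q + 1) ≤ a 1 * a (p + (q + 1)) := by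
      simpa [add_comm, add_left_comm, add_assoc] using hlog 1 p q
    calc _ ≤ (a p + a (p + 1)) * (a (q + 1) * l2Norm h) := hbound p (q + 1)
      _ = (a p * a (q + 1) + a (p + 1) * a (q + 1)) * l2Norm h := by ring
      _ ≤ (a 0 * a (p + (q + 1)) + a 1 * a (p + (q + 1))) * l2Norm h := by
        gcongr
        exact l2Norm_nonneg _
      _ = _ := by ring

lemma abs_integral_iteratedDeriv_mul_mul_succ_le (j k : ℕ) :
    |∫ x, iteratedDeriv j v x * iteratedDeriv k v x * iteratedDeriv (j + k + 1) v x|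
      ≤ 2 * ((l2Norm (iteratedDeriv 0 v) + l2Norm (iteratedDeriv 1 v))
        * l2Norm (iteratedDeriv (j + k + 1) v) * l2Norm (iteratedDeriv (j + k) v)) := by
  have hibp := integral_mul_mul_deriv ((derivCLM ℝ ℝ)^[j] v) ((derivCLM ℝ ℝ)^[k] v)
    ((derivCLM ℝ ℝ)^[j + k] v)
  simp only [coe_iterate_derivCLM, ← iteratedDeriv_succ] at hibp
  have h₁ := abs_integral_iteratedDeriv_mul_le v ((derivCLM ℝ ℝ)^[j + k] v) (j + 1) k
  have h₂ := abs_integral_iteratedDeriv_mul_le v ((derivCLM ℝ ℝ)^[j + k] v) j (k + 1)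
  simp only [coe_iterate_derivCLM] at h₁ h₂
  rw [show j + 1 + k = j + k + 1 by omega] at h₁
  rw [show j + (k + 1) = j + k + 1 by omega] at h₂
  rw [hibp, abs_neg, two_mul]
  exact (abs_add_le _ _).trans (add_le_add h₁ h₂)

lemma abs_integral_iteratedDeriv_sq_mul_le (n : ℕ) :
    |∫ x, iteratedDeriv n (fun y => v y ^ 2) x * iteratedDeriv (n + 1) v x|
      ≤ 2 ^ (n + 1) * ((l2Norm (iteratedDeriv 0 v) + l2Norm (iteratedDeriv 1 v))
        * l2Norm (iteratedDeriv (n + 1) v) * l2Norm (iteratedDeriv n v)) := by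
  set B := (l2Norm (iteratedDeriv 0 v) + l2Norm (iteratedDeriv 1 v))
    * l2Norm (iteratedDeriv (n + 1) v) * l2Norm (iteratedDeriv n v)
  have hleibniz : ∀ x, iteratedDeriv n (fun y => v y ^ 2) x
      = ∑ j ∈ Finset.range (n + 1),
          (n.choose j : ℝ) * iteratedDeriv j v x * iteratedDeriv (n - j) v x := fun x => by
    simp only [sq]
    exact iteratedDeriv_fun_mul (v.smooth n).contDiffAt (v.smooth n).contDiffAt
  have hterm : ∀ j ∈ Finset.range (n + 1),
      |∫ x, iteratedDeriv j v x * iteratedDeriv (n - j) v x * iteratedDeriv (n + 1) v x|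
        ≤ 2 * B := fun j hj => by
    have := abs_integral_iteratedDeriv_mul_mul_succ_le v j (n - j)
    rwa [show j + (n - j) = n by grind] at this
  have hint : ∀ j ∈ Finset.range (n + 1), Integrable fun x =>
      (n.choose j : ℝ) * iteratedDeriv j v x * iteratedDeriv (n - j) v x
        * iteratedDeriv (n + 1) v x := fun j _ => by
    simpa only [coe_iterate_derivCLM, mul_assoc] using
      (integrable_mul_mul ((derivCLM ℝ ℝ)^[j] v) ((derivCLM ℝ ℝ)^[n - j] v)
        ((derivCLM ℝ ℝ)^[n + 1] v)).const_mul (n.choose j : ℝ)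
  simp only [hleibniz, Finset.sum_mul]
  rw [integral_finsetSum _ hint]
  simp only [mul_assoc, integral_const_mul]
  calc _ ≤ ∑ j ∈ Finset.range (n + 1), (n.choose j : ℝ) * (2 * B) := by
        refine (Finset.abs_sum_le_sum_abs _ _).trans (Finset.sum_le_sum fun j hj => ?_)
        rw [abs_mul, Nat.abs_cast]
        simpa only [mul_assoc] using
          mul_le_mul_of_nonneg_left (hterm j hj) (Nat.cast_nonneg (n.choose j))
    _ = 2 ^ (n + 1) * B := by
        rw [← Finset.sum_mul, ← Nat.cast_sum, Nat.sum_range_choose]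
        push_cast
        ring

end IteratedDerivatives

theorem statement9 :
    ∀ α : ℕ, 2 ≤ α →
      ∃ C : ℝ, 0 < C ∧
        ∀ v : SchwartzMap ℝ ℝ,
          |∫ x : ℝ, iteratedDeriv α (fun y : ℝ => (v y)^2) x * iteratedDeriv (α + 1) (⇑v) x|
            ≤ C * (HkN 1 (iteratedDeriv α (⇑v)))^2 * HkN (α - 1) (⇑v) := by
  intro α hα
  refine ⟨2 ^ (α + 2), by positivity, fun v => ?_⟩
  set L := HkN (α - 1) v
  set H := HkN 1 (iteratedDeriv α v)
  have h₀ : l2Norm (iteratedDeriv 0 v) ≤ L := l2Norm_iteratedDeriv_le_HkN (by omega) v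
  have h₁ : l2Norm (iteratedDeriv 1 v) ≤ L := l2Norm_iteratedDeriv_le_HkN (by omega) v
  have hα₀ : l2Norm (iteratedDeriv α v) ≤ H := by
    simpa using l2Norm_iteratedDeriv_le_HkN zero_le_one (iteratedDeriv α v)
  have hα₁ : l2Norm (iteratedDeriv (α + 1) v) ≤ H := by
    simpa [iteratedDeriv_succ] using
      l2Norm_iteratedDeriv_le_HkN (k := 1) le_rfl (iteratedDeriv α v)
  calc _ ≤ 2 ^ (α + 1) * ((l2Norm (iteratedDeriv 0 v) + l2Norm (iteratedDeriv 1 v))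
        * l2Norm (iteratedDeriv (α + 1) v) * l2Norm (iteratedDeriv α v)) :=
        abs_integral_iteratedDeriv_sq_mul_le v α
    _ ≤ 2 ^ (α + 1) * ((L + L) * H * H) := by
        have hL : 0 ≤ L := sqrt_nonneg _
        have hH : 0 ≤ H := sqrt_nonneg _
        gcongr <;> exact l2Norm_nonneg _
    _ = 2 ^ (α + 2) * H ^ 2 * L := by ring
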